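/- arXiv:1301.0282 — 6 statements merged into one kernel-verified Lean document; each statement's English description precedes it below -/
import Mathlib

section
/- Let G be a finite simple graph. Then there exists an orientation D of G such that every directed simple path in D has at most χ(G) vertices (equivalently, length at most χ(G) − 1). [Easy direction of the Gallai–Hasse–Roy–Vitaver theorem: orient each edge from the endpoint of larger color to the endpoint of smaller color in a proper coloring with colors 1, …, χ(G).] -/
/-! Colour `G` properly with a linearly ordered set of `χ(G)` colours and orient every edge
towards its endpoint of smaller colour. Colours strictly decrease along a directed path, so its
vertices carry pairwise distinct colours and there are at most `χ(G)` of them. If `χ(G)` is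
infinite the bound is void, and ordering the vertices themselves gives an orientation. -/

namespace SimpleGraph

universe u

variable {V : Type u} {α : Type*} {G : SimpleGraph V}

def Coloring.orientation [LT α] (C : G.Coloring α) (u v : V) : Prop :=
  G.Adj u v ∧ C v < C u

theorem Coloring.xor_orientation [LinearOrder α] (C : G.Coloring α) {u v : V} (h : G.Adj u v) :
    Xor (C.orientation u v) (C.orientation v u) := by
  rcases (C.valid h).lt_or_gt with hlt | hgt
  · exact Or.inr ⟨⟨h.symm, hlt⟩, fun h' => hlt.asymm h'.2⟩
  · exact Or.inl ⟨⟨h, hgt⟩, fun h' => hgt.asymm h'.2⟩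

theorem Coloring.length_le_enatCard_of_chain [LinearOrder α] (C : G.Coloring α) {l : List V}
    (hl : l.IsChain C.orientation) : (l.length : ℕ∞) ≤ ENat.card α := by
  have hdecr : (l.map C).IsChain (· > ·) := List.isChain_map_of_isChain C (fun _ _ h => h.2) hl
  have hnodup : (l.map C).Nodup :=
    (List.isChain_iff_pairwise.mp hdecr).imp fun h => h.ne'
  simpa using hnodup.length_le_enatCard

theorem exists_coloring_enatCard_le_chromaticNumber (G : SimpleGraph V) :
    ∃ (α : Type u) (_ : LinearOrder α) (_ : G.Coloring α), ENat.card α ≤ G.chromaticNumber := by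
  cases hχ : G.chromaticNumber using ENat.recTopCoe with
  | top => exact ⟨V, IsWellOrder.linearOrder WellOrderingRel, G.selfColoring, le_top⟩
  | coe n =>
    have hcol : G.Colorable n := chromaticNumber_le_iff_colorable.mp hχ.le
    exact ⟨ULift (Fin n), inferInstance, recolorOfEquiv G Equiv.ulift.symm hcol.some, by simp⟩

end SimpleGraph

theorem gallai_hasse_roy_vitaver_easy_general {V : Type} (G : SimpleGraph V) :
    ∃ r : V → V → Prop,
      (∀ u v, r u v → G.Adj u v) ∧
      (∀ u v, G.Adj u v → Xor' (r u v) (r v u)) ∧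
      (∀ l : List V, l.Nodup → l.Chain' r →
        (l.length : ℕ∞) ≤ G.chromaticNumber) := by
  obtain ⟨α, _, C, hα⟩ := G.exists_coloring_enatCard_le_chromaticNumber
  exact ⟨C.orientation, fun _ _ h => h.1, fun _ _ => C.xor_orientation,
    fun _ _ hl => (C.length_le_enatCard_of_chain hl).trans hα⟩

/-- Easy direction of the Gallai–Hasse–Roy–Vitaver theorem: every finite simple
graph `G` admits an orientation in which every directed simple path has at most
`χ(G)` vertices. An orientation is given by a relation `r` such that `r u v`
implies adjacency and for each edge exactly one of the two directions holds;
a directed simple path is a duplicate-free list chained by `r`. -/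
theorem gallai_hasse_roy_vitaver_easy {V : Type} [Fintype V] (G : SimpleGraph V) :
    ∃ r : V → V → Prop,
      (∀ u v, r u v → G.Adj u v) ∧
      (∀ u v, G.Adj u v → Xor' (r u v) (r v u)) ∧
      (∀ l : List V, l.Nodup → l.Chain' r →
        (l.length : ℕ∞) ≤ G.chromaticNumber) :=
  gallai_hasse_roy_vitaver_easy_general G
end

section
/- Let G be a finite simple graph. Then for every orientation D of G there exists a directed simple path in D with at least χ(G) vertices (equivalently, of length at least χ(G) − 1). [Hard direction of the Gallai–Hasse–Roy–Vitaver theorem.] -/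
/-!
Take a maximal acyclic set `s` of arcs of the orientation and colour each vertex by the number of
steps of a longest `s`-path ending at it. Along an arc of `s` this colour strictly increases. An arc
`u → v` outside `s` would close a cycle with `s`, so `s` already contains a path from `v` to `u`,
and the colour of `v` is strictly smaller than that of `u`. Hence the colouring is proper, and it
uses no more colours than there are vertices on a longest `s`-path, which is a directed path of the
orientation.
-/

open Relation

namespace Relation

variable {α : Type*} {s : α → α → Prop}

theorem TransGen.or_edge_cases {u v a b : α}
    (h : TransGen (fun x y => s x y ∨ x = u ∧ y = v) a b) :
    TransGen s a b ∨ ReflTransGen s a u ∧ ReflTransGen s v b := by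
  induction h using TransGen.head_induction_on with
  | single h =>
    rcases h with h | ⟨rfl, rfl⟩
    · exact .inl (.single h)
    · exact .inr ⟨.refl, .refl⟩
  | head hac _ ih =>
    rcases hac with hac | ⟨rfl, rfl⟩
    · exact ih.imp (·.head hac) fun ⟨hcu, hvb⟩ => ⟨hcu.head hac, hvb⟩
    · exact .inr ⟨.refl, ih.elim TransGen.to_reflTransGen And.right⟩

theorem exists_maximal_acyclic_le [Finite α] (r : α → α → Prop) :
    ∃ s, Maximal (fun t => t ≤ r ∧ ∀ x, ¬ TransGen t x x) s := by
  obtain ⟨s, -, hs⟩ := Finite.exists_le_maximal (a := ⊥)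
    (p := fun t : α → α → Prop => t ≤ r ∧ ∀ x, ¬ TransGen t x x)
    ⟨bot_le, fun x h => (TransGen.head'_iff.mp h).elim fun _ h => h.1⟩
  exact ⟨s, hs⟩

theorem reflTransGen_of_maximal_acyclic {r : α → α → Prop}
    (hs : Maximal (fun t => t ≤ r ∧ ∀ x, ¬ TransGen t x x) s) {u v : α} (huv : r u v)
    (hns : ¬ s u v) : ReflTransGen s v u := by
  set t : α → α → Prop := fun x y => s x y ∨ x = u ∧ y = v
  have hst : s ≤ t := fun x y h => .inl h
  have htr : t ≤ r := fun x y h => h.elim (hs.prop.1 x y) fun ⟨hx, hy⟩ => hx ▸ hy ▸ huv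
  have hts : ¬ t ≤ s := fun h => hns (h u v (.inr ⟨rfl, rfl⟩))
  obtain ⟨x, hx⟩ : ∃ x, TransGen t x x := by
    by_contra! hacyc
    exact hts (hs.2 ⟨htr, hacyc⟩ hst)
  rcases hx.or_edge_cases with hx | ⟨hxu, hvx⟩
  · exact absurd hx (hs.prop.2 x)
  · exact hvx.trans hxu

end Relation

theorem List.IsChain.reflTransGen_of_mem_of_getLast? {α : Type*} {s : α → α → Prop}
    {l : List α} (hl : l.IsChain s) {a b : α} (ha : a ∈ l) (hb : l.getLast? = some b) :
    ReflTransGen s a b := by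
  obtain ⟨l₁, l₂, rfl⟩ := List.mem_iff_append.mp ha
  rw [List.getLast?_append_cons, List.getLast?_eq_getLast_of_ne_nil (List.cons_ne_nil _ _),
    Option.some_inj] at hb
  exact List.relationReflTransGen_of_exists_isChain_cons l₂ (hl.suffix ⟨l₁, rfl⟩) hb

section LongestChain

variable {α : Type*} [Fintype α] (s : α → α → Prop)

def HasChainTo (v : α) (n : ℕ) : Prop :=
  ∃ l : List α, l.Nodup ∧ l.IsChain s ∧ l.getLast? = some v ∧ l.length = n + 1

open Classical in
/-- The number of steps, one less than the number of vertices, of a longest duplicate-free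
`s`-chain ending at `v`. -/
noncomputable def longestChainTo (v : α) : ℕ :=
  Nat.findGreatest (HasChainTo s v) (Fintype.card α)

theorem exists_chain_length_longestChainTo (v : α) : ∃ l : List α, l.Nodup ∧ l.IsChain s ∧
    l.getLast? = some v ∧ l.length = longestChainTo s v + 1 := by
  classical
  exact Nat.findGreatest_spec (P := HasChainTo s v) (Nat.zero_le _)
    ⟨[v], List.nodup_singleton v, List.isChain_singleton v, rfl, rfl⟩

variable {s}

theorem longestChainTo_lt_of_rel (hs : ∀ x, ¬ TransGen s x x) {u v : α} (huv : s u v) :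
    longestChainTo s u < longestChainTo s v := by
  classical
  obtain ⟨l, hnd, hch, hlast, hlen⟩ := exists_chain_length_longestChainTo s u
  have hv : v ∉ l := fun hv => hs v (.tail' (hch.reflTransGen_of_mem_of_getLast? hv hlast) huv)
  have hnd' : (l ++ [v]).Nodup := hnd.append (List.nodup_singleton v) (by simpa using hv)
  have hch' : (l ++ [v]).IsChain s := List.isChain_append.mpr ⟨hch, List.isChain_singleton v,
    by simp [hlast, huv]⟩
  have hcard : longestChainTo s u + 1 ≤ Fintype.card α := by
    have := hnd'.length_le_card
    simp only [List.length_append, hlen, List.length_singleton] at this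
    omega
  exact Nat.le_findGreatest hcard ⟨l ++ [v], hnd', hch', by simp, by simp [hlen]⟩

theorem longestChainTo_lt_of_transGen (hs : ∀ x, ¬ TransGen s x x) {u v : α}
    (huv : TransGen s u v) : longestChainTo s u < longestChainTo s v := by
  simpa [transGen_eq_self] using
    huv.lift (longestChainTo s) fun _ _ => longestChainTo_lt_of_rel hs

variable (s)

theorem exists_chain_forall_longestChainTo_lt :
    ∃ l : List α, l.Nodup ∧ l.IsChain s ∧ ∀ v, longestChainTo s v < l.length := by
  cases isEmpty_or_nonempty α
  · exact ⟨[], List.nodup_nil, List.isChain_nil, isEmptyElim⟩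
  obtain ⟨v₀, hv₀⟩ := Finite.exists_max (longestChainTo s)
  obtain ⟨l, hnd, hch, -, hlen⟩ := exists_chain_length_longestChainTo s v₀
  exact ⟨l, hnd, hch, fun v => hlen ▸ Nat.lt_succ_of_le (hv₀ v)⟩

end LongestChain

theorem longestChainTo_ne_of_maximal_acyclic {α : Type*} [Fintype α] {r s : α → α → Prop}
    (hr : ∀ x, ¬ r x x) (hs : Maximal (fun t => t ≤ r ∧ ∀ x, ¬ TransGen t x x) s) {u v : α}
    (huv : r u v) : longestChainTo s u ≠ longestChainTo s v := by
  by_cases hsuv : s u v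
  · exact (longestChainTo_lt_of_rel hs.prop.2 hsuv).ne
  · obtain rfl | hvu :=
      reflTransGen_iff_eq_or_transGen.mp (reflTransGen_of_maximal_acyclic hs huv hsuv)
    · exact absurd huv (hr u)
    · exact (longestChainTo_lt_of_transGen hs.prop.2 hvu).ne'

/-- Hard direction of the Gallai–Hasse–Roy–Vitaver theorem: in every
orientation of a finite simple graph `G` there is a directed simple path with
at least `χ(G)` vertices. An orientation is given by a relation `r` such that
`r u v` implies adjacency and for each edge exactly one of the two directions
holds; a directed simple path is a duplicate-free list chained by `r`. -/
theorem gallai_hasse_roy_vitaver_hard {V : Type} [Fintype V] (G : SimpleGraph V)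
    (r : V → V → Prop)
    (hr_sub : ∀ u v, r u v → G.Adj u v)
    (hr_orient : ∀ u v, G.Adj u v → Xor' (r u v) (r v u)) :
    ∃ l : List V, l.Nodup ∧ l.Chain' r ∧
      G.chromaticNumber ≤ (l.length : ℕ∞) := by
  obtain ⟨s, hs⟩ := exists_maximal_acyclic_le r
  have hr : ∀ v, ¬ r v v := fun v h => G.loopless.irrefl v (hr_sub v v h)
  let C : G.Coloring ℕ := SimpleGraph.Coloring.mk (longestChainTo s) fun {u v} huv =>
    (Xor.or (hr_orient u v huv)).elim (longestChainTo_ne_of_maximal_acyclic hr hs)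
      fun hvu => (longestChainTo_ne_of_maximal_acyclic hr hs hvu).symm
  obtain ⟨l, hnd, hch, hlt⟩ := exists_chain_forall_longestChainTo_lt s
  refine ⟨l, hnd, hch.imp hs.prop.1, ?_⟩
  exact ((SimpleGraph.colorable_iff_exists_bdd_nat_coloring _).mpr ⟨C, hlt⟩).chromaticNumber_le
end

section
/- Let G be a finite simple graph on n vertices with minimum degree at least k, where k ≥ 3 and n ≥ 2. Then for every edge {u, v} of G there exists a self-colliding path in G starting with the edge (u, v) of length at most 2⌈log_{k−1} n⌉; that is, there exist pairwise distinct vertices v₁ = u, v₂ = v, v₃, …, v_m with v_t adjacent to v_{t+1} for 1 ≤ t < m, with m − 1 ≤ 2⌈log_{k−1} n⌉, such that v_m is adjacent to v_i for some 1 ≤ i ≤ m − 2. -/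
/-!
Let `d = ⌈log_{k-1} n⌉` and suppose no self-colliding path of length `≤ 2d` starts with `(u, v)`.
Then every path of length `≤ 2d` starting with `(u, v)` is induced, so its last vertex has at
least `k - 1` neighbours off the path, and there are at least `(k - 1)^d ≥ n` paths of length
`d + 1` starting with `(u, v)`. Two of them cannot end at the same vertex, since together they
would contain a self-colliding path of length `≤ 2d`, and none of them ends at `u`; so they have
at least `n` distinct endpoints other than `u`, which is absurd.
-/

namespace SimpleGraph

variable {V : Type*} (G : SimpleGraph V)

/-- Paths are stored newest vertex first, so that growing a path is `List.cons`; in this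
orientation a path is self-colliding when its head is adjacent to a vertex at index `≥ 2`. -/
def HeadCollides : List V → Prop
  | x :: _ :: l => ∃ y ∈ l, G.Adj x y
  | _ => False

variable {G} in
theorem HeadCollides.exists_adj_getLast_reverse {P : List V} (h : G.HeadCollides P)
    (hP : P.reverse ≠ []) : ∃ i : Fin P.reverse.length,
      (i : ℕ) + 2 < P.reverse.length ∧ G.Adj (P.reverse.getLast hP) (P.reverse.get i) := by
  match P, h with
  | x :: p :: l, ⟨y, hy, hxy⟩ =>
    obtain ⟨i, hi, rfl⟩ := List.mem_iff_getElem.1 (List.mem_reverse.2 hy)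
    refine ⟨⟨i, by simp at hi ⊢; omega⟩, by simp at hi ⊢; omega, ?_⟩
    simp only [List.get_eq_getElem, List.getLast_reverse, List.head_cons]
    simp only [List.reverse_cons, List.append_assoc]
    rwa [List.getElem_append_left hi]

section Extensions

variable [Fintype V] [DecidableEq V] [DecidableRel G.Adj]

open scoped Finset

def pathExtensions : List V → Finset (List V)
  | [] => ∅
  | x :: l => (G.neighborFinset x \ (x :: l).toFinset).image (· :: x :: l)

def pathsExtending (s : List V) : ℕ → Finset (List V)
  | 0 => {s}
  | n + 1 => (pathsExtending s n).biUnion G.pathExtensions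

variable {G}

theorem mem_pathExtensions_cons {x : V} {l m : List V} :
    m ∈ G.pathExtensions (x :: l) ↔ ∃ y, G.Adj x y ∧ y ∉ x :: l ∧ y :: x :: l = m := by
  simp [pathExtensions, and_assoc]

theorem tail_of_mem_pathExtensions {l m : List V} (hm : m ∈ G.pathExtensions l) : m.tail = l := by
  cases l with
  | nil => simp [pathExtensions] at hm
  | cons x l => obtain ⟨y, -, -, rfl⟩ := mem_pathExtensions_cons.1 hm; rfl

theorem mem_pathsExtending_succ {s m : List V} {n : ℕ} :
    m ∈ G.pathsExtending s (n + 1) ↔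
      ∃ x l y, x :: l ∈ G.pathsExtending s n ∧ G.Adj x y ∧ y ∉ x :: l ∧ y :: x :: l = m := by
  simp only [pathsExtending, Finset.mem_biUnion]
  constructor
  · rintro ⟨_ | ⟨x, l⟩, hl, hm⟩
    · simp [pathExtensions] at hm
    · exact ⟨x, l, mem_pathExtensions_cons.1 hm |>.imp fun y h => ⟨hl, h⟩⟩
  · rintro ⟨x, l, y, hl, hy⟩
    exact ⟨x :: l, hl, mem_pathExtensions_cons.2 ⟨y, hy⟩⟩

variable {s : List V}

theorem suffix_of_mem_pathsExtending {n : ℕ} {m : List V} (hm : m ∈ G.pathsExtending s n) :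
    s <:+ m := by
  induction n generalizing m with
  | zero => simp_all [pathsExtending]
  | succ n ih =>
    obtain ⟨x, l, y, hl, -, -, rfl⟩ := mem_pathsExtending_succ.1 hm
    exact (ih hl).trans (List.suffix_cons _ _)

theorem length_of_mem_pathsExtending {n : ℕ} {m : List V} (hm : m ∈ G.pathsExtending s n) :
    m.length = s.length + n := by
  induction n generalizing m with
  | zero => simp_all [pathsExtending]
  | succ n ih =>
    obtain ⟨x, l, y, hl, -, -, rfl⟩ := mem_pathsExtending_succ.1 hm
    simp [← add_assoc, ← ih hl]

theorem nodup_of_mem_pathsExtending (hs : s.Nodup) {n : ℕ} {m : List V}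
    (hm : m ∈ G.pathsExtending s n) : m.Nodup := by
  induction n generalizing m with
  | zero => simp_all [pathsExtending]
  | succ n ih =>
    obtain ⟨x, l, y, hl, -, hy, rfl⟩ := mem_pathsExtending_succ.1 hm
    exact List.nodup_cons.2 ⟨hy, ih hl⟩

theorem isChain_of_mem_pathsExtending (hs : s.IsChain G.Adj) {n : ℕ} {m : List V}
    (hm : m ∈ G.pathsExtending s n) : m.IsChain G.Adj := by
  induction n generalizing m with
  | zero => simp_all [pathsExtending]
  | succ n ih =>
    obtain ⟨x, l, y, hl, hxy, -, rfl⟩ := mem_pathsExtending_succ.1 hm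
    exact (ih hl).cons_cons hxy.symm

theorem eq_of_mem_pathsExtending_of_head?_eq {n : ℕ} {m : List V}
    (hm : m ∈ G.pathsExtending s n) (hhead : m.head? = s.head?) : m = s := by
  cases n with
  | zero => simpa [pathsExtending] using hm
  | succ n =>
    obtain ⟨x, l, y, hl, -, hy, rfl⟩ := mem_pathsExtending_succ.1 hm
    rcases s with _ | ⟨z, s⟩
    · simp at hhead
    · obtain rfl : y = z := by simpa using hhead
      exact absurd ((suffix_of_mem_pathsExtending hl).subset List.mem_cons_self) hy

/-- Two different paths with a common end give a self-colliding path: follow the first one and,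
if the second one arrived at the common end from a vertex `q` not yet visited, step to `q` and
retrace the second path backwards. -/
theorem exists_headCollides_of_head?_eq {j : ℕ} :
    ∀ {i : ℕ} {P Q : List V}, P ∈ G.pathsExtending s i → Q ∈ G.pathsExtending s j → P ≠ Q →
      P.head? = Q.head? → ∃ m < i + j, ∃ R ∈ G.pathsExtending s m, G.HeadCollides R := by
  induction j with
  | zero =>
    intro i P Q hP hQ hPQ hhead
    rw [pathsExtending, Finset.mem_singleton] at hQ
    exact absurd (eq_of_mem_pathsExtending_of_head?_eq hP (hQ ▸ hhead)) (hQ ▸ hPQ)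
  | succ j ih =>
    intro i P Q hP hQ hPQ hhead
    obtain ⟨q, Q', y, hQ', hqy, hyQ, rfl⟩ := mem_pathsExtending_succ.1 hQ
    cases i with
    | zero =>
      rw [pathsExtending, Finset.mem_singleton] at hP
      exact absurd (eq_of_mem_pathsExtending_of_head?_eq hQ (hP ▸ hhead.symm)).symm (hP ▸ hPQ)
    | succ i =>
      obtain ⟨p, P', y', hP', -, -, rfl⟩ := mem_pathsExtending_succ.1 hP
      obtain rfl : y = y' := by simpa using hhead.symm
      by_cases hpq : p = q
      · subst hpq
        obtain ⟨m, hm, R, hR⟩ := ih hP' hQ' (by simpa using hPQ) rfl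
        exact ⟨m, by omega, R, hR⟩
      by_cases hqP : q ∈ p :: P'
      · refine ⟨i + 1, by omega, _, hP, q, ?_, hqy.symm⟩
        simpa [Ne.symm hpq] using hqP
      · have hqyP : q ∉ y :: p :: P' := by simpa [hqy.ne] using hqP
        have hext := mem_pathsExtending_succ.2 ⟨y, p :: P', q, hP, hqy.symm, hqyP, rfl⟩
        obtain ⟨m, hm, R, hR⟩ :=
          ih hext hQ' (fun h => hyQ (by simp [← List.cons.inj h |>.2])) rfl
        exact ⟨m, by omega, R, hR⟩

theorem degree_sub_one_le_card_pathExtensions {x p : V} {l : List V}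
    (h : ¬ G.HeadCollides (x :: p :: l)) : G.degree x - 1 ≤ #(G.pathExtensions (x :: p :: l)) := by
  have hsub : G.neighborFinset x \ {p} ⊆ G.neighborFinset x \ (x :: p :: l).toFinset := by
    intro y hy
    simp only [Finset.mem_sdiff, mem_neighborFinset, Finset.mem_singleton] at hy
    have hyl : y ∉ l := fun hyl => h ⟨y, hyl, hy.1⟩
    simp [hy.1, hy.1.ne', hy.2, hyl]
  calc G.degree x - 1 = #(G.neighborFinset x) - #{p} := by rw [card_neighborFinset_eq_degree]; rfl
    _ ≤ #(G.neighborFinset x \ {p}) := Finset.le_card_sdiff _ _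
    _ ≤ #(G.neighborFinset x \ (x :: p :: l).toFinset) := Finset.card_le_card hsub
    _ = #(G.pathExtensions (x :: p :: l)) :=
      (Finset.card_image_of_injective _ fun _ _ h => List.cons.inj h |>.1).symm

theorem mul_card_pathsExtending_le {k n : ℕ} (hdeg : ∀ w, k ≤ G.degree w) (hs : 2 ≤ s.length)
    (hfree : ∀ P ∈ G.pathsExtending s n, ¬ G.HeadCollides P) :
    (k - 1) * #(G.pathsExtending s n) ≤ #(G.pathsExtending s (n + 1)) := by
  have hdisj : (G.pathsExtending s n : Set (List V)).PairwiseDisjoint G.pathExtensions :=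
    fun P _ Q _ hPQ => Finset.disjoint_left.2 fun _ hP hQ =>
      hPQ ((tail_of_mem_pathExtensions hP).symm.trans (tail_of_mem_pathExtensions hQ))
  rw [pathsExtending, Finset.card_biUnion hdisj, mul_comm, ← smul_eq_mul, ← Finset.sum_const]
  refine Finset.sum_le_sum fun P hP => ?_
  obtain ⟨x, p, l, rfl⟩ : ∃ x p l, P = x :: p :: l := by
    have hlen := length_of_mem_pathsExtending hP
    match P with
    | x :: p :: l => exact ⟨x, p, l, rfl⟩
    | [] | [_] => simp at hlen; omega
  have hx := hdeg x
  have := degree_sub_one_le_card_pathExtensions (hfree _ hP)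
  omega

theorem pow_le_card_pathsExtending {k d : ℕ} (hdeg : ∀ w, k ≤ G.degree w) (hs : 2 ≤ s.length)
    (hfree : ∀ n < d, ∀ P ∈ G.pathsExtending s n, ¬ G.HeadCollides P) :
    (k - 1) ^ d ≤ #(G.pathsExtending s d) := by
  induction d with
  | zero => simp [pathsExtending]
  | succ d ih =>
    calc (k - 1) ^ (d + 1) = (k - 1) * (k - 1) ^ d := pow_succ' _ _
      _ ≤ (k - 1) * #(G.pathsExtending s d) :=
        Nat.mul_le_mul_left _ (ih fun n hn => hfree n (by omega))
      _ ≤ #(G.pathsExtending s (d + 1)) := mul_card_pathsExtending_le hdeg hs (hfree d (by omega))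

theorem card_pathsExtending_lt_of_injOn {n : ℕ} {u : V} (hs : s.Nodup) (hu : u ∈ s.tail)
    (hinj : Set.InjOn List.head? (G.pathsExtending s n : Set (List V))) :
    #(G.pathsExtending s n) < Fintype.card V := by
  have hhead : ∀ P ∈ G.pathsExtending s n, P.head? ∈ (Finset.univ.erase u).map .some := by
    rintro (_ | ⟨x, l⟩) hP
    · simp [List.suffix_nil.1 (suffix_of_mem_pathsExtending hP)] at hu
    have hul : u ∈ l := by
      rcases List.suffix_cons_iff.1 (suffix_of_mem_pathsExtending hP) with rfl | h
      · simpa using hu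
      · exact h.subset (List.mem_of_mem_tail hu)
    have hxl := (List.nodup_cons.1 (nodup_of_mem_pathsExtending hs hP)).1
    simpa using fun hxu : x = u => hxl (hxu ▸ hul)
  calc #(G.pathsExtending s n) ≤ #((Finset.univ.erase u).map .some) :=
        Finset.card_le_card_of_injOn _ hhead hinj
    _ < Fintype.card V := by simp [Finset.card_erase_of_mem, Fintype.card_pos_iff.2 ⟨u⟩]

theorem exists_selfColliding_of_mem_pathsExtending {u v : V} {m : ℕ} {P : List V}
    (huv : G.Adj u v) (hP : P ∈ G.pathsExtending [v, u] m) (hPc : G.HeadCollides P) :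
    ∃ (l : List V) (hl : l ≠ []), l.Nodup ∧ l.IsChain G.Adj ∧ l.take 2 = [u, v] ∧
      l.length = m + 2 ∧ ∃ i : Fin l.length, (i : ℕ) + 2 < l.length ∧
        G.Adj (l.getLast hl) (l.get i) := by
  have hlen := length_of_mem_pathsExtending hP
  have hP0 : P.reverse ≠ [] := by simp [← List.length_pos_iff, hlen]
  have hchain := isChain_of_mem_pathsExtending (by simp [huv.symm]) hP
  obtain ⟨t, rfl⟩ := suffix_of_mem_pathsExtending hP
  refine ⟨_, hP0, List.nodup_reverse.2 (nodup_of_mem_pathsExtending (by simp [huv.ne']) hP),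
    List.isChain_reverse.2 (hchain.imp fun _ _ h => h.symm), by simp, by simp at hlen ⊢; omega,
    hPc.exists_adj_getLast_reverse hP0⟩

end Extensions

end SimpleGraph

theorem exists_self_colliding_path_general {V : Type} [Fintype V]
    (G : SimpleGraph V) [DecidableRel G.Adj]
    (k : ℕ) (hk : 3 ≤ k)
    (hdeg : ∀ w : V, k ≤ G.degree w)
    (u v : V) (huv : G.Adj u v) :
    ∃ (l : List V) (hl : l ≠ []),
      l.Nodup ∧ l.Chain' G.Adj ∧ l.take 2 = [u, v] ∧
      l.length - 1 ≤ 2 * Nat.clog (k - 1) (Fintype.card V) ∧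
      ∃ i : Fin l.length, (i : ℕ) + 2 < l.length ∧
        G.Adj (l.getLast hl) (l.get i) := by
  classical
  set d := Nat.clog (k - 1) (Fintype.card V)
  suffices ∃ m < 2 * d, ∃ P ∈ G.pathsExtending [v, u] m, G.HeadCollides P by
    obtain ⟨m, hm, P, hP, hPc⟩ := this
    obtain ⟨l, hl, hnodup, hchain, htake, hlen, hcollide⟩ :=
      G.exists_selfColliding_of_mem_pathsExtending huv hP hPc
    exact ⟨l, hl, hnodup, hchain, htake, by omega, hcollide⟩
  by_contra! hfree
  have hpow := G.pow_le_card_pathsExtending (d := d) hdeg (by simp) fun n hn => hfree n (by omega)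
  have hinj : Set.InjOn List.head? (G.pathsExtending [v, u] d : Set (List V)) :=
    fun P hP Q hQ hPQ => by
      by_contra hne
      obtain ⟨m, hm, R, hR, hRc⟩ := G.exists_headCollides_of_head?_eq hP hQ hne hPQ
      exact hfree m (by omega) R hR hRc
  have hlt := G.card_pathsExtending_lt_of_injOn (u := u) (by simp [huv.ne']) (by simp) hinj
  have hclog : Fintype.card V ≤ (k - 1) ^ d := Nat.le_pow_clog (by omega) _
  omega

/-- In a finite simple graph on `n ≥ 2` vertices with minimum degree at least
`k ≥ 3`, every edge `(u, v)` starts a self-colliding path of length at most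
`2⌈log_{k-1} n⌉`: a duplicate-free list `l = u :: v :: ⋯` chained by adjacency
whose last vertex is adjacent to some vertex `l.get i` with `i + 2 < l.length`
(i.e. to some `vᵢ` with `1 ≤ i ≤ m - 2` in 1-indexed notation). -/
theorem exists_self_colliding_path {V : Type} [Fintype V] [DecidableEq V]
    (G : SimpleGraph V) [DecidableRel G.Adj]
    (k : ℕ) (hk : 3 ≤ k) (hn : 2 ≤ Fintype.card V)
    (hdeg : ∀ w : V, k ≤ G.degree w)
    (u v : V) (huv : G.Adj u v) :
    ∃ (l : List V) (hl : l ≠ []),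
      l.Nodup ∧ l.Chain' G.Adj ∧ l.take 2 = [u, v] ∧
      l.length - 1 ≤ 2 * Nat.clog (k - 1) (Fintype.card V) ∧
      ∃ i : Fin l.length, (i : ℕ) + 2 < l.length ∧
        G.Adj (l.getLast hl) (l.get i) :=
  exists_self_colliding_path_general G k hk hdeg u v huv
end

section
/- Let G be a finite simple graph on n vertices with minimum degree at least k, where k ≥ 3 and n ≥ 2. Then G contains a cycle, and its girth satisfies g(G) ≤ 2⌈log_{k−1} n⌉. -/
/-!
If `G` has no cycle of length at most `2r`, breadth-first search from any vertex `v` grows like a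
tree up to depth `r`: a vertex at distance `j < r` from `v` has at most one neighbour at distance
`≤ j`, and a vertex at distance `j + 1` has at most one neighbour at distance `j`, because two such
neighbours would give two distinct paths from `v` of length `≤ j + 1` with a common end, hence a
cycle of length `≤ 2j + 2`. With minimum degree `k`, double counting the edges between consecutive
spheres shows that the sphere of radius `r` has at least `k (k - 1)^(r - 1) > (k - 1)^r` vertices,
which exceeds `n` once `r = ⌈log_{k-1} n⌉`.
-/

open Finset

namespace SimpleGraph

variable {V : Type} {G : SimpleGraph V}

lemma dist_le_dist_add_one_of_adj {u v w : V} (h : G.Adj v w) : G.dist u w ≤ G.dist u v + 1 := by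
  rcases h.diff_dist_adj (u := u) with h | h | h <;> omega

lemma egirth_le_dist_add_dist_add_two {v x y₁ y₂ : V} (hx : G.Reachable v x)
    (h₁ : G.Adj x y₁) (h₂ : G.Adj x y₂) (hne : y₁ ≠ y₂)
    (hd₁ : G.dist v y₁ ≤ G.dist v x) (hd₂ : G.dist v y₂ ≤ G.dist v x) :
    G.egirth ≤ G.dist v y₁ + G.dist v y₂ + 2 := by
  classical
  have geodesic_to_x : ∀ y (h : G.Adj x y), G.dist v y ≤ G.dist v x →
      ∃ p : G.Walk v y, (p.concat h.symm).IsPath ∧ p.length = G.dist v y := by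
    intro y h hd
    obtain ⟨p, hp, hpl⟩ := (hx.trans h.reachable).exists_path_of_dist
    refine ⟨p, hp.concat (fun hmem => ?_) h.symm, hpl⟩
    have := p.length_takeUntil_lt_length hmem (G.ne_of_adj h)
    have := G.dist_le (p.takeUntil x hmem)
    omega
  obtain ⟨p₁, hp₁, hl₁⟩ := geodesic_to_x y₁ h₁ hd₁
  obtain ⟨p₂, hp₂, hl₂⟩ := geodesic_to_x y₂ h₂ hd₂
  have hpne : p₁.concat h₁.symm ≠ p₂.concat h₂.symm := fun h => hne <| by
    simpa only [Walk.penultimate_concat] using congrArg Walk.penultimate h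
  obtain ⟨_, -, -, c, hc, hcl⟩ := hp₁.exists_isCycle_length_le_add_of_ne hp₂ hpne
  refine (egirth_le_length hc).trans ?_
  simp only [Walk.length_concat] at hcl
  exact_mod_cast (by omega : c.length ≤ G.dist v y₁ + G.dist v y₂ + 2)

lemma eq_of_adj_of_dist_le {v y z₁ z₂ : V} {m : ℕ} (hy : G.Reachable v y) (hm : m ≤ G.dist v y)
    (hg : (2 * m + 2 : ℕ) < G.egirth) (h₁ : G.Adj y z₁) (h₂ : G.Adj y z₂)
    (hd₁ : G.dist v z₁ ≤ m) (hd₂ : G.dist v z₂ ≤ m) : z₁ = z₂ := by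
  by_contra hne
  have hcycle := egirth_le_dist_add_dist_add_two hy h₁ h₂ hne (hd₁.trans hm) (hd₂.trans hm)
  have : (G.dist v z₁ + G.dist v z₂ + 2 : ℕ) ≤ (2 * m + 2 : ℕ) := by omega
  exact hg.not_ge (hcycle.trans (by exact_mod_cast this))

variable [Fintype V]

/-- `G.dist` is `0` between unreachable vertices, so only the spheres of positive radius consist
of vertices connected to `v`. -/
noncomputable def distSphere (G : SimpleGraph V) (v : V) (i : ℕ) : Finset V := {w | G.dist v w = i}

@[simp]
lemma mem_distSphere {v w : V} {i : ℕ} : w ∈ G.distSphere v i ↔ G.dist v w = i := by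
  simp [distSphere]

lemma distSphere_one [DecidableRel G.Adj] (v : V) : G.distSphere v 1 = G.neighborFinset v := by
  ext; simp

lemma card_distSphere_mul_le [DecidableRel G.Adj] {k j : ℕ} (hdeg : ∀ w, k ≤ G.degree w) (v : V)
    (hj : 0 < j) (hg : (2 * j + 2 : ℕ) < G.egirth) :
    #(G.distSphere v j) * (k - 1) ≤ #(G.distSphere v (j + 1)) := by
  classical
  have forward : ∀ x ∈ G.distSphere v j,
      k - 1 ≤ #((G.distSphere v (j + 1)).bipartiteAbove G.Adj x) := by
    intro x hx
    have hdx := mem_distSphere.mp hx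
    have hx' : G.Reachable v x := Reachable.of_dist_ne_zero (by omega)
    have hcover : G.neighborFinset x ⊆
        {z ∈ G.neighborFinset x | G.dist v z ≤ j} ∪
          (G.distSphere v (j + 1)).bipartiteAbove G.Adj x := by
      intro z hz
      rw [mem_neighborFinset] at hz
      have := dist_le_dist_add_one_of_adj (u := v) hz
      by_cases hzj : G.dist v z ≤ j
      · simp [hz, hzj]
      · exact mem_union_right _ (mem_filter.mpr ⟨mem_distSphere.mpr (by omega), hz⟩)
    have hback : #{z ∈ G.neighborFinset x | G.dist v z ≤ j} ≤ 1 := by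
      refine card_le_one.mpr fun z₁ hz₁ z₂ hz₂ => ?_
      simp only [mem_filter, mem_neighborFinset] at hz₁ hz₂
      exact eq_of_adj_of_dist_le hx' hdx.ge hg hz₁.1 hz₂.1 hz₁.2 hz₂.2
    have := (card_le_card hcover).trans (card_union_le _ _)
    rw [card_neighborFinset_eq_degree] at this
    have := hdeg x
    omega
  have backward : ∀ y ∈ G.distSphere v (j + 1),
      #((G.distSphere v j).bipartiteBelow G.Adj y) ≤ 1 := by
    intro y hy
    refine card_le_one.mpr fun z₁ hz₁ z₂ hz₂ => ?_
    simp only [mem_bipartiteBelow, mem_distSphere] at hz₁ hz₂ hy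
    exact eq_of_adj_of_dist_le (Reachable.of_dist_ne_zero (by omega)) (by omega) hg
      hz₁.2.symm hz₂.2.symm hz₁.1.le hz₂.1.le
  simpa using card_mul_le_card_mul G.Adj forward backward

lemma mul_pow_le_card_distSphere [DecidableRel G.Adj] {k : ℕ} (hdeg : ∀ w, k ≤ G.degree w)
    (v : V) : ∀ i, (2 * (i + 1) : ℕ) < G.egirth → k * (k - 1) ^ i ≤ #(G.distSphere v (i + 1))
  | 0, _ => by simpa [distSphere_one] using hdeg v
  | i + 1, hg => by
    have hg' : (2 * (i + 1) : ℕ) < G.egirth := lt_of_le_of_lt (by norm_cast; omega) hg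
    calc k * (k - 1) ^ (i + 1) = k * (k - 1) ^ i * (k - 1) := by ring
      _ ≤ #(G.distSphere v (i + 1)) * (k - 1) :=
        Nat.mul_le_mul_right _ (mul_pow_le_card_distSphere hdeg v i hg')
      _ ≤ #(G.distSphere v (i + 1 + 1)) :=
        card_distSphere_mul_le hdeg v (by omega) (by simpa [mul_add] using hg)

lemma egirth_le_of_card_lt_mul_pow [DecidableRel G.Adj] [Nonempty V] {k : ℕ}
    (hdeg : ∀ w, k ≤ G.degree w) (i : ℕ) (hcard : Fintype.card V < k * (k - 1) ^ i) :
    G.egirth ≤ (2 * (i + 1) : ℕ) := by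
  by_contra! hg
  obtain ⟨v⟩ := ‹Nonempty V›
  exact hcard.not_ge ((mul_pow_le_card_distSphere hdeg v i hg).trans (card_le_univ _))

end SimpleGraph

open SimpleGraph in
theorem girth_le_of_minDegree_general {V : Type} [Fintype V]
    (G : SimpleGraph V) [DecidableRel G.Adj]
    (k : ℕ) (hk : 3 ≤ k) (hn : 2 ≤ Fintype.card V)
    (hdeg : ∀ w : V, k ≤ G.degree w) :
    (∃ (v : V) (c : G.Walk v v), c.IsCycle) ∧
    G.girth ≤ ((2 * Nat.clog (k - 1) (Fintype.card V) : ℕ) : ℕ∞) := by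
  have : Nonempty V := Fintype.card_pos_iff.mp (by omega)
  obtain ⟨i, hi⟩ := Nat.exists_eq_add_one_of_ne_zero (Nat.clog_pos (b := k - 1) (by omega) hn).ne'
  have hegirth : G.egirth ≤ (2 * Nat.clog (k - 1) (Fintype.card V) : ℕ) := by
    refine hi ▸ egirth_le_of_card_lt_mul_pow hdeg i ?_
    calc Fintype.card V ≤ (k - 1) ^ (i + 1) := hi ▸ Nat.le_pow_clog (by omega) _
      _ = (k - 1) ^ i * (k - 1) := pow_succ _ _
      _ < (k - 1) ^ i * k := Nat.mul_lt_mul_of_pos_left (by omega) (pow_pos (by omega) _)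
      _ = k * (k - 1) ^ i := mul_comm _ _
  obtain ⟨v, c, hc, hlen⟩ := exists_egirth_eq_length.mpr fun hG : G.IsAcyclic =>
    ENat.natCast_ne_top _ (top_le_iff.mp (hG.egirth_eq_top ▸ hegirth))
  refine ⟨⟨v, c, hc⟩, ?_⟩
  rw [girth, hlen, ENat.toNat_natCast, ← hlen]
  exact hegirth

/-- Moore-type bound: a finite simple graph on `n ≥ 2` vertices with minimum
degree at least `k ≥ 3` contains a cycle, and its girth is at most
`2⌈log_{k-1} n⌉`. -/
theorem girth_le_of_minDegree {V : Type} [Fintype V] [DecidableEq V]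
    (G : SimpleGraph V) [DecidableRel G.Adj]
    (k : ℕ) (hk : 3 ≤ k) (hn : 2 ≤ Fintype.card V)
    (hdeg : ∀ w : V, k ≤ G.degree w) :
    (∃ (v : V) (c : G.Walk v v), c.IsCycle) ∧
    G.girth ≤ ((2 * Nat.clog (k - 1) (Fintype.card V) : ℕ) : ℕ∞) :=
  girth_le_of_minDegree_general G k hk hn hdeg
end

section
/- Let G be a finite simple graph on n vertices with minimum degree at least δ, where δ ≥ 3 and n ≥ 2. Then every vertex u of G lies within graph distance ⌈log_{δ−1} n⌉ + 1 of some cycle of length at most 2⌈log_{δ−1} n⌉; that is, there exists a cycle C in G with |C| ≤ 2⌈log_{δ−1} n⌉ and a vertex w on C with dist_G(u, w) ≤ ⌈log_{δ−1} n⌉ + 1. -/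
/-!
Let `k = ⌈log_{δ-1} n⌉`. If two distinct paths of length at most `k` leave `u` and end at the
same vertex, they close up a cycle of length at most `2k` through a vertex on one of them, hence
within distance `k` of `u`. Otherwise paths of length at most `k` out of `u` are determined by
their endpoints, so around `u` the graph looks like a tree: the endpoint of such a path has at most
one neighbour on it, so the path extends in at least `δ - 1` ways, and no vertex is reached by two
extensions. Hence at least `(δ - 1)^k ≥ n` vertices other than `u` end a path of length `k`,
which is absurd.
-/

open Finset

namespace SimpleGraph

variable {V : Type*} {G : SimpleGraph V} {u : V}

def UniqueShortPathsFrom (G : SimpleGraph V) (u : V) (k : ℕ) : Prop :=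
  ∀ ⦃v : V⦄ (p q : G.Walk u v),
    p.IsPath → q.IsPath → p.length ≤ k → q.length ≤ k → p = q

lemma UniqueShortPathsFrom.mono {k l : ℕ} (h : G.UniqueShortPathsFrom u l) (hkl : k ≤ l) :
    G.UniqueShortPathsFrom u k :=
  fun _ p q hp hq hpk hqk => h p q hp hq (hpk.trans hkl) (hqk.trans hkl)

lemma exists_short_cycle_of_not_uniqueShortPathsFrom {k : ℕ}
    (h : ¬ G.UniqueShortPathsFrom u k) :
    ∃ (w : V) (c : G.Walk w w) (p : G.Walk u w),
      c.IsCycle ∧ c.length ≤ 2 * k ∧ p.length ≤ k := by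
  classical
  simp only [UniqueShortPathsFrom, not_forall] at h
  obtain ⟨v, p, q, hp, hq, hpk, hqk, hne⟩ := h
  obtain ⟨w, hwp, -, c, hc, hlen⟩ := hp.exists_isCycle_length_le_add_of_ne hq hne
  exact ⟨w, c, p.takeUntil w hwp, hc, by omega, (p.length_takeUntil_le_length hwp).trans hpk⟩

/-- Any other neighbour `x` of `v` on `p` would give a second, shorter path:
`p.takeUntil x` followed by the edge `xv`. -/
lemma UniqueShortPathsFrom.eq_penultimate_of_mem_support {v x : V} {p : G.Walk u v}
    (h : G.UniqueShortPathsFrom u p.length) (hp : p.IsPath) (hx : x ∈ p.support)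
    (hadj : G.Adj x v) : x = p.penultimate := by
  classical
  have hq : ((p.takeUntil x hx).concat hadj).IsPath :=
    (hp.takeUntil hx).concat (Walk.endpoint_notMem_support_takeUntil hp hx hadj.ne.symm) hadj
  have hlen : ((p.takeUntil x hx).concat hadj).length ≤ p.length := by
    rw [Walk.length_concat]
    exact p.length_takeUntil_lt_length hx hadj.ne
  rw [← h _ p hq hp hlen le_rfl, Walk.penultimate_concat]

variable [Fintype V]

open Classical in
noncomputable def pathEnds (G : SimpleGraph V) (u : V) (i : ℕ) : Finset V :=
  {v | ∃ p : G.Walk u v, p.IsPath ∧ p.length = i}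

lemma mem_pathEnds {i : ℕ} {v : V} :
    v ∈ G.pathEnds u i ↔ ∃ p : G.Walk u v, p.IsPath ∧ p.length = i := by
  simp [pathEnds]

lemma card_pathEnds_lt_card {i : ℕ} (hi : 1 ≤ i) : #(G.pathEnds u i) < Fintype.card V := by
  refine card_lt_univ_of_notMem (x := u) fun hu => ?_
  obtain ⟨p, hp, hlen⟩ := mem_pathEnds.1 hu
  rw [(Walk.isPath_iff_nil.1 hp).length_eq_zero] at hlen
  omega

variable [DecidableRel G.Adj] {δ : ℕ}

lemma card_pathEnds_mul_le (hdeg : ∀ w, δ ≤ G.degree w) {i : ℕ}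
    (h : G.UniqueShortPathsFrom u (i + 1)) :
    #(G.pathEnds u i) * (δ - 1) ≤ #(G.pathEnds u (i + 1)) := by
  classical
  let extends_to (v x : V) : Prop :=
    ∃ p : G.Walk u v, p.IsPath ∧ p.length = i ∧ x ∉ p.support ∧ G.Adj v x
  have many_extensions : ∀ v ∈ G.pathEnds u i,
      δ - 1 ≤ #((G.pathEnds u (i + 1)).bipartiteAbove extends_to v) := by
    intro v hv
    obtain ⟨p, hp, rfl⟩ := mem_pathEnds.1 hv
    have on_path : G.neighborFinset v ∩ p.support.toFinset ⊆ {p.penultimate} := by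
      intro x hx
      simp only [mem_inter, mem_neighborFinset, List.mem_toFinset] at hx
      exact mem_singleton.2 <|
        (h.mono p.length.le_succ).eq_penultimate_of_mem_support hp hx.2 hx.1.symm
    have off_path : G.neighborFinset v \ p.support.toFinset ⊆
        (G.pathEnds u (p.length + 1)).bipartiteAbove extends_to v := by
      intro x hx
      simp only [mem_sdiff, mem_neighborFinset, List.mem_toFinset] at hx
      rw [mem_bipartiteAbove, mem_pathEnds]
      exact ⟨⟨p.concat hx.1, hp.concat hx.2 hx.1, Walk.length_concat ..⟩,
        p, hp, rfl, hx.2, hx.1⟩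
    have hsplit := card_sdiff_add_card_inter (G.neighborFinset v) p.support.toFinset
    rw [card_neighborFinset_eq_degree] at hsplit
    have := (card_le_card on_path).trans (card_singleton _).le
    have := card_le_card off_path
    have := hdeg v
    omega
  have unique_origin : ∀ x ∈ G.pathEnds u (i + 1),
      #((G.pathEnds u i).bipartiteBelow extends_to x) ≤ 1 := by
    refine fun x _ => card_le_one.2 fun v₁ hv₁ v₂ hv₂ => ?_
    obtain ⟨p₁, hp₁, hl₁, hx₁, ha₁⟩ := (mem_bipartiteBelow _).1 hv₁ |>.2
    obtain ⟨p₂, hp₂, hl₂, hx₂, ha₂⟩ := (mem_bipartiteBelow _).1 hv₂ |>.2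
    exact (Walk.concat_inj <| h _ _ (hp₁.concat hx₁ ha₁) (hp₂.concat hx₂ ha₂)
      (by simp [hl₁]) (by simp [hl₂])).1
  simpa using card_mul_le_card_mul extends_to many_extensions unique_origin

lemma pow_le_card_pathEnds (hdeg : ∀ w, δ ≤ G.degree w) {k : ℕ}
    (h : G.UniqueShortPathsFrom u k) : ∀ i ≤ k, (δ - 1) ^ i ≤ #(G.pathEnds u i)
  | 0, _ => by simpa using ⟨u, mem_pathEnds.2 ⟨.nil, .nil, rfl⟩⟩
  | i + 1, hi =>
    calc (δ - 1) ^ (i + 1) = (δ - 1) ^ i * (δ - 1) := pow_succ ..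
      _ ≤ #(G.pathEnds u i) * (δ - 1) :=
        Nat.mul_le_mul_right _ (pow_le_card_pathEnds hdeg h i (by omega))
      _ ≤ #(G.pathEnds u (i + 1)) := card_pathEnds_mul_le hdeg (h.mono hi)

theorem pow_lt_card_of_uniqueShortPathsFrom (hdeg : ∀ w, δ ≤ G.degree w) {k : ℕ}
    (hk : 1 ≤ k) (h : G.UniqueShortPathsFrom u k) : (δ - 1) ^ k < Fintype.card V :=
  (pow_le_card_pathEnds hdeg h k le_rfl).trans_lt (card_pathEnds_lt_card hk)

end SimpleGraph

theorem vertex_close_to_short_cycle_general {V : Type} [Fintype V]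
    (G : SimpleGraph V) [DecidableRel G.Adj]
    (δ : ℕ) (hδ : 3 ≤ δ) (hn : 2 ≤ Fintype.card V)
    (hdeg : ∀ w : V, δ ≤ G.degree w) (u : V) :
    ∃ (w : V) (c : G.Walk w w) (p : G.Walk u w),
      c.IsCycle ∧
      c.length ≤ 2 * Nat.clog (δ - 1) (Fintype.card V) ∧
      p.length ≤ Nat.clog (δ - 1) (Fintype.card V) + 1 := by
  set k := Nat.clog (δ - 1) (Fintype.card V)
  by_cases h : G.UniqueShortPathsFrom u k
  · have hk : 1 ≤ k := Nat.clog_pos (by omega) hn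
    exact absurd (Nat.le_pow_clog (by omega) _)
      (SimpleGraph.pow_lt_card_of_uniqueShortPathsFrom hdeg hk h).not_ge
  · obtain ⟨w, c, p, hc, hcl, hpl⟩ :=
      SimpleGraph.exists_short_cycle_of_not_uniqueShortPathsFrom h
    exact ⟨w, c, p, hc, hcl, hpl.trans k.le_succ⟩

/-- In a finite simple graph on `n ≥ 2` vertices with minimum degree at least
`δ ≥ 3`, every vertex `u` lies within distance `⌈log_{δ-1} n⌉ + 1` of some
cycle of length at most `2⌈log_{δ-1} n⌉`: there is a cycle based at a vertex
`w` of that length and a walk from `u` to `w` of length at most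
`⌈log_{δ-1} n⌉ + 1`. -/
theorem vertex_close_to_short_cycle {V : Type} [Fintype V] [DecidableEq V]
    (G : SimpleGraph V) [DecidableRel G.Adj]
    (δ : ℕ) (hδ : 3 ≤ δ) (hn : 2 ≤ Fintype.card V)
    (hdeg : ∀ w : V, δ ≤ G.degree w) (u : V) :
    ∃ (w : V) (c : G.Walk w w) (p : G.Walk u w),
      c.IsCycle ∧
      c.length ≤ 2 * Nat.clog (δ - 1) (Fintype.card V) ∧
      p.length ≤ Nat.clog (δ - 1) (Fintype.card V) + 1 :=
  vertex_close_to_short_cycle_general G δ hδ hn hdeg u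
end

section
/- Let G be a finite simple graph on n vertices, n ≥ 2, and let k ≥ 3 be an integer. If every cycle of G has length strictly greater than 2⌈log_{k−1} n⌉, then the chromatic number of G satisfies χ(G) ≤ k. -/
/-!
If `G` is not `k`-colourable then greedy colouring fails, so some induced subgraph `H` of `G`
has minimum degree at least `k`. Let `r = ⌈log_{k-1} n⌉` and fix a vertex `u` of `H`. As `H` has
no cycle of length at most `2r`, two paths of length at most `r` from `u` with the same end are
equal. Hence a vertex ending a path of length `i < r` from `u` has all its neighbours except its
predecessor among the ends of paths of length `i + 1`, and each of those is adjacent to only one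
end of a path of length `i`. Double counting gives at least `(k-1)^r ≥ n` ends of paths of length
`r`, none of them equal to `u`: too many vertices.
-/

open Finset

namespace SimpleGraph

variable {V α : Type*}

def IsProperOn (G : SimpleGraph V) (C : V → α) (s : Finset V) : Prop :=
  ∀ u ∈ s, ∀ v ∈ s, G.Adj u v → C u ≠ C v

variable {G : SimpleGraph V}

section

variable [DecidableEq V] [Fintype V] [DecidableRel G.Adj]

lemma IsProperOn.exists_update [Fintype α] {C : V → α} {s : Finset V} (hC : G.IsProperOn C s)
    {v : V} (hv : #(G.neighborFinset v ∩ s) < Fintype.card α) :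
    ∃ c, G.IsProperOn (Function.update C v c) (insert v s) := by
  classical
  have hcard : #((G.neighborFinset v ∩ s).image C) < #(univ : Finset α) := by
    rw [card_univ]
    exact card_image_le.trans_lt hv
  obtain ⟨c, -, hc⟩ := exists_mem_notMem_of_card_lt_card hcard
  have hnb : ∀ w ∈ insert v s, G.Adj v w → C w ≠ c := fun w hw hvw hwc =>
    hc (mem_image.2 ⟨w, mem_inter.2 ⟨(G.mem_neighborFinset v w).2 hvw,
      (mem_insert.1 hw).resolve_left hvw.ne'⟩, hwc⟩)
  refine ⟨c, fun u hu w hw huw => ?_⟩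
  rcases eq_or_ne u v with rfl | hu'
  · simpa [huw.ne'] using (hnb w hw huw).symm
  rcases eq_or_ne w v with rfl | hwv
  · simpa [hu'] using hnb u hu huw.symm
  · simpa [hu', hwv] using hC u ((mem_insert.1 hu).resolve_left hu') w
      ((mem_insert.1 hw).resolve_left hwv) huw

lemma exists_isProperOn_or_exists_le_card_neighborFinset_inter {k : ℕ} [NeZero k]
    (s : Finset V) : (∃ C : V → Fin k, G.IsProperOn C s) ∨
      ∃ t ⊆ s, t.Nonempty ∧ ∀ v ∈ t, k ≤ #(G.neighborFinset v ∩ t) := by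
  induction s using Finset.strongInduction with
  | H s ih =>
  by_cases hhigh : ∀ v ∈ s, k ≤ #(G.neighborFinset v ∩ s)
  · rcases s.eq_empty_or_nonempty with rfl | hs
    · exact Or.inl ⟨0, by simp [IsProperOn]⟩
    · exact Or.inr ⟨s, subset_rfl, hs, hhigh⟩
  obtain ⟨v, hv, hdeg⟩ : ∃ v ∈ s, #(G.neighborFinset v ∩ s) < k := by simpa using hhigh
  rcases ih (s.erase v) (erase_ssubset hv) with ⟨C, hC⟩ | ⟨t, hts, ht⟩
  · have hdeg' : #(G.neighborFinset v ∩ s.erase v) < Fintype.card (Fin k) := by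
      simpa using (card_le_card (inter_subset_inter_left (erase_subset v s))).trans_lt hdeg
    obtain ⟨c, hc⟩ := hC.exists_update hdeg'
    exact Or.inl ⟨_, by rwa [insert_erase hv] at hc⟩
  · exact Or.inr ⟨t, hts.trans (erase_subset v s), ht⟩

lemma degree_induce_eq_card_neighborFinset_inter (s : Finset V) (v : (s : Set V)) :
    (G.induce s).degree v = #(G.neighborFinset v ∩ s) := by
  rw [← card_neighborFinset_eq_degree, ← card_map (.subtype (· ∈ (s : Set V)))]
  congr 1
  ext w
  simp

theorem exists_le_minDegree_induce_of_not_colorable {k : ℕ} [NeZero k] (h : ¬ G.Colorable k) :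
    ∃ s : Finset V, s.Nonempty ∧ k ≤ (G.induce s).minDegree := by
  rcases G.exists_isProperOn_or_exists_le_card_neighborFinset_inter (k := k) univ
    with ⟨C, hC⟩ | ⟨s, -, hs, hdeg⟩
  · exact absurd ⟨Coloring.mk C fun huv => hC _ (mem_univ _) _ (mem_univ _) huv⟩ h
  · have : Nonempty (s : Set V) := hs.coe_sort
    exact ⟨s, hs, le_minDegree_of_forall_le_degree _ _ fun v => by
      rw [degree_induce_eq_card_neighborFinset_inter]; exact hdeg v v.2⟩

end

namespace Walk

variable {u v w : V}

lemma IsPath.eq_of_length_add_length_lt_egirth {p q : G.Walk u v} (hp : p.IsPath)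
    (hq : q.IsPath) (h : ((p.length + q.length : ℕ) : ℕ∞) < G.egirth) : p = q := by
  by_contra hne
  obtain ⟨_, _, _, c, hc, hlen⟩ := hp.exists_isCycle_length_le_add_of_ne hq hne
  exact ((egirth_le_length hc).trans (by exact_mod_cast hlen)).not_gt h

variable [DecidableEq V]

lemma IsPath.eq_penultimate_of_adj_of_mem_support {p : G.Walk u v} (hp : p.IsPath)
    (h : ((2 * p.length : ℕ) : ℕ∞) < G.egirth) (hadj : G.Adj w v) (hw : w ∈ p.support) :
    w = p.penultimate := by
  have hq : ((p.takeUntil w hw).concat hadj).IsPath :=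
    (hp.takeUntil hw).concat (endpoint_notMem_support_takeUntil hp hw hadj.ne') hadj
  have hlen := length_takeUntil_lt_length hw hadj.ne
  have hpq := hp.eq_of_length_add_length_lt_egirth hq
    (h.trans_le' (Nat.cast_le.2 (by simp only [length_concat]; omega)))
  rw [hpq, penultimate_concat]

lemma IsPath.eq_penultimate_of_adj_of_length_eq_add_one {p : G.Walk u w} {q : G.Walk u v}
    (hp : p.IsPath) (hq : q.IsPath) (hlen : q.length = p.length + 1)
    (h : ((2 * q.length : ℕ) : ℕ∞) < G.egirth) (hadj : G.Adj w v) : w = q.penultimate := by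
  by_cases hv : v ∈ p.support
  · have := p.length_takeUntil_le_length hv
    have hqp := hq.eq_of_length_add_length_lt_egirth (hp.takeUntil hv)
      (h.trans_le' (Nat.cast_le.2 (by omega)))
    have := congrArg length hqp
    omega
  · rw [hq.eq_of_length_add_length_lt_egirth (hp.concat hv hadj)
      (h.trans_le' (Nat.cast_le.2 (by simp only [length_concat]; omega))), penultimate_concat]

end Walk

variable [Fintype V]

open Classical in
noncomputable def pathEndpoints (G : SimpleGraph V) (u : V) (i : ℕ) : Finset V :=
  {v | ∃ p : G.Walk u v, p.IsPath ∧ p.length = i}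

lemma mem_pathEndpoints {u v : V} {i : ℕ} :
    v ∈ G.pathEndpoints u i ↔ ∃ p : G.Walk u v, p.IsPath ∧ p.length = i := by
  simp [pathEndpoints]

variable [DecidableRel G.Adj]

lemma card_pathEndpoints_mul_le {u : V} {i : ℕ} (h : ((2 * (i + 1) : ℕ) : ℕ∞) < G.egirth) :
    #(G.pathEndpoints u i) * (G.minDegree - 1) ≤ #(G.pathEndpoints u (i + 1)) := by
  classical
  refine (card_mul_le_card_mul G.Adj ?_ ?_).trans (mul_one _).le
  · intro w hw
    obtain ⟨p, hp, rfl⟩ := mem_pathEndpoints.1 hw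
    have hsub : G.neighborFinset w ⊆
        insert p.penultimate ((G.pathEndpoints u (p.length + 1)).bipartiteAbove G.Adj w) := by
      intro y hy
      rw [mem_neighborFinset] at hy
      by_cases hyp : y ∈ p.support
      · exact mem_insert.2 (Or.inl (hp.eq_penultimate_of_adj_of_mem_support
          (h.trans' (Nat.cast_lt.2 (by omega))) hy.symm hyp))
      · exact mem_insert_of_mem ((mem_bipartiteAbove _).2
          ⟨mem_pathEndpoints.2 ⟨_, hp.concat hyp hy, Walk.length_concat _ _⟩, hy⟩)
    have := (card_le_card hsub).trans (card_insert_le _ _)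
    rw [card_neighborFinset_eq_degree] at this
    have := G.minDegree_le_degree w
    omega
  · intro v hv
    obtain ⟨q, hq, hql⟩ := mem_pathEndpoints.1 hv
    have hpen : ∀ w ∈ (G.pathEndpoints u i).bipartiteBelow G.Adj v, w = q.penultimate := by
      intro w hw
      obtain ⟨hw, hadj⟩ := (mem_bipartiteBelow _).1 hw
      obtain ⟨p, hp, rfl⟩ := mem_pathEndpoints.1 hw
      exact hp.eq_penultimate_of_adj_of_length_eq_add_one hq hql (by rwa [hql]) hadj
    exact card_le_one.2 fun w hw w' hw' => (hpen w hw).trans (hpen w' hw').symm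

lemma pow_le_card_pathEndpoints (u : V) {r : ℕ} (h : ((2 * r : ℕ) : ℕ∞) < G.egirth) :
    (G.minDegree - 1) ^ r ≤ #(G.pathEndpoints u r) := by
  induction r with
  | zero =>
    exact one_le_card.2 ⟨u, mem_pathEndpoints.2 ⟨.nil, .nil, rfl⟩⟩
  | succ r ih =>
    calc (G.minDegree - 1) ^ (r + 1)
        = (G.minDegree - 1) ^ r * (G.minDegree - 1) := pow_succ _ _
      _ ≤ #(G.pathEndpoints u r) * (G.minDegree - 1) :=
        Nat.mul_le_mul_right _ (ih (h.trans' (Nat.cast_lt.2 (by omega))))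
      _ ≤ #(G.pathEndpoints u (r + 1)) := card_pathEndpoints_mul_le h

theorem minDegree_sub_one_pow_lt_card [Nonempty V] {r : ℕ} (hr : r ≠ 0)
    (h : ((2 * r : ℕ) : ℕ∞) < G.egirth) : (G.minDegree - 1) ^ r < Fintype.card V := by
  obtain ⟨u⟩ := ‹Nonempty V›
  have hu : u ∉ G.pathEndpoints u r := by
    rw [mem_pathEndpoints]
    rintro ⟨p, hp, rfl⟩
    exact hr (Walk.length_eq_zero_iff.2 (Walk.isPath_iff_nil.1 hp))
  exact (pow_le_card_pathEndpoints u h).trans_lt (card_lt_univ_of_notMem hu)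

end SimpleGraph

/-- If every cycle of a finite simple graph `G` on `n ≥ 2` vertices has length
strictly greater than `2⌈log_{k-1} n⌉` (where `k ≥ 3`), then `χ(G) ≤ k`. -/
theorem chromaticNumber_le_of_no_short_cycles {V : Type} [Fintype V]
    (G : SimpleGraph V) (k : ℕ) (hk : 3 ≤ k) (hn : 2 ≤ Fintype.card V)
    (hcyc : ∀ (v : V) (c : G.Walk v v), c.IsCycle →
      2 * Nat.clog (k - 1) (Fintype.card V) < c.length) :
    G.chromaticNumber ≤ (k : ℕ∞) := by
  classical
  have : NeZero k := ⟨by omega⟩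
  rw [SimpleGraph.chromaticNumber_le_iff_colorable]
  by_contra hcol
  obtain ⟨s, hs, hdeg⟩ := SimpleGraph.exists_le_minDegree_induce_of_not_colorable hcol
  have : Nonempty (s : Set V) := hs.coe_sort
  set r := Nat.clog (k - 1) (Fintype.card V)
  have hr : r ≠ 0 := (Nat.clog_pos (by omega) (by omega)).ne'
  have hgirth : ((2 * r : ℕ) : ℕ∞) < G.egirth := by
    rw [← ENat.add_one_le_iff (ENat.natCast_ne_top _), SimpleGraph.le_egirth]
    exact fun v c hc => by exact_mod_cast hcyc v c hc
  have hmoore := (G.induce s).minDegree_sub_one_pow_lt_card hr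
    (hgirth.trans_le (SimpleGraph.Embedding.induce _).isContained.egirth_le)
  have hlt : (k - 1) ^ r < Fintype.card V :=
    calc (k - 1) ^ r ≤ ((G.induce s).minDegree - 1) ^ r := by gcongr
      _ < Fintype.card (s : Set V) := hmoore
      _ ≤ Fintype.card V := Fintype.card_subtype_le _
  exact hlt.not_ge (Nat.le_pow_clog (by omega) _)
end
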